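/- Consider the two-player game Γ_1 with action sets {a1,a2} for player 1 and {b1,b2} for player 2, and payoffs (u_1,u_2): (a1,b1)↦(1,1), (a1,b2)↦(0,0), (a2,b1)↦(0,0), (a2,b2)↦(0,0). Then: (i) the pure profiles (a1,b1) and (a2,b2) are both Nash equilibria of Γ_1; (ii) in every weakly payoff monotone strategy profile σ for Γ_1, player 1 plays a1 with probability at least 1/2; and (iii) (a1,b1) is an empirical equilibrium of Γ_1 while (a2,b2) is not. -/

import Mathlib

/-!
In Γ₁ the expected payoff of both players is `σ(a1) σ(b1)`, and the action a2 (or b2) earns `0`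
against everything, never more than a1 (or b1). Weak payoff monotonicity therefore forbids player 1
to put more weight on a2 than on a1, so `σ(a1) ≥ 1/2`. This bound is closed, hence survives in the
limit defining empirical equilibria, which excludes (a2,b2). The strict equilibrium (a1,b1) is
itself weakly payoff monotone, so it is the limit of a constant sequence.
-/

open Filter Topology

section GameDefs

variable {N : Type} [Fintype N] [DecidableEq N] {A : N → Type}
  [∀ i, Fintype (A i)] [∀ i, DecidableEq (A i)]

/-- A mixed-strategy profile: each `σ i` is a probability distribution on `A i`. -/
def IsStrategy (σ : ∀ i, A i → ℝ) : Prop :=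
  (∀ i a, 0 ≤ σ i a) ∧ ∀ i, ∑ a, σ i a = 1

/-- An interior profile places positive probability on every action. -/
def Interior (σ : ∀ i, A i → ℝ) : Prop :=
  ∀ i a, 0 < σ i a

/-- Expected utility of player `i` at profile `σ`. -/
noncomputable def expUtil (u : ∀ i : N, (∀ j, A j) → ℝ) (σ : ∀ i, A i → ℝ) (i : N) : ℝ :=
  ∑ a : ∀ j, A j, u i a * ∏ j, σ j (a j)

/-- Expected utility of player `i` from playing action `ai` against `σ₋ᵢ`. -/
noncomputable def devUtil (u : ∀ i : N, (∀ j, A j) → ℝ) (σ : ∀ i, A i → ℝ)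
    (i : N) (ai : A i) : ℝ :=
  expUtil u (Function.update σ i (fun b => if b = ai then (1 : ℝ) else 0)) i

/-- Nash equilibrium. -/
def IsNash (u : ∀ i : N, (∀ j, A j) → ℝ) (σ : ∀ i, A i → ℝ) : Prop :=
  IsStrategy σ ∧ ∀ (i : N) (μ : A i → ℝ), (∀ a, 0 ≤ μ a) → (∑ a, μ a = 1) →
    expUtil u (Function.update σ i μ) i ≤ expUtil u σ i

/-- Weak payoff monotonicity: differences in behavior reveal differences in payoffs. -/
def WeaklyPayoffMonotone (u : ∀ i : N, (∀ j, A j) → ℝ) (σ : ∀ i, A i → ℝ) : Prop :=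
  IsStrategy σ ∧ ∀ (i : N) (ai bi : A i), σ i bi < σ i ai →
    devUtil u σ i bi < devUtil u σ i ai

/-- Payoff monotonicity. -/
def PayoffMonotone (u : ∀ i : N, (∀ j, A j) → ℝ) (σ : ∀ i, A i → ℝ) : Prop :=
  IsStrategy σ ∧ ∀ (i : N) (ai bi : A i),
    σ i bi ≤ σ i ai ↔ devUtil u σ i bi ≤ devUtil u σ i ai

/-- Pointwise convergence of a sequence of profiles. -/
def ConvergesTo (s : ℕ → ∀ i, A i → ℝ) (σ : ∀ i, A i → ℝ) : Prop :=
  ∀ (i : N) (ai : A i), Tendsto (fun n => s n i ai) atTop (𝓝 (σ i ai))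

/-- Empirical equilibrium: a Nash equilibrium that is the limit of weakly payoff
monotone profiles. -/
def IsEmpirical (u : ∀ i : N, (∀ j, A j) → ℝ) (σ : ∀ i, A i → ℝ) : Prop :=
  IsNash u σ ∧ ∃ s : ℕ → ∀ i, A i → ℝ,
    (∀ n, WeaklyPayoffMonotone u (s n)) ∧ ConvergesTo s σ

/-- Proper equilibrium (Myerson). -/
def IsProper (u : ∀ i : N, (∀ j, A j) → ℝ) (σ : ∀ i, A i → ℝ) : Prop :=
  IsStrategy σ ∧ ∃ s : ℕ → ∀ i, A i → ℝ,
    (∀ n, IsStrategy (s n) ∧ Interior (s n) ∧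
      ∀ (i : N) (ai bi : A i),
        devUtil u (s n) i bi < devUtil u (s n) i ai →
          s n i bi ≤ (1 / (n + 1) : ℝ) * s n i ai) ∧
    ConvergesTo s σ

/-- Perfect equilibrium (Selten, in Myerson's formulation). -/
def IsPerfect (u : ∀ i : N, (∀ j, A j) → ℝ) (σ : ∀ i, A i → ℝ) : Prop :=
  IsStrategy σ ∧ ∃ s : ℕ → ∀ i, A i → ℝ,
    (∀ n, IsStrategy (s n) ∧ Interior (s n) ∧
      ∀ (i : N) (ai : A i), (1 / (n + 1) : ℝ) < s n i ai →
        ∀ bi : A i, devUtil u (s n) i bi ≤ devUtil u (s n) i ai) ∧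
    ConvergesTo s σ

/-- `bi` weakly dominates `ai` for player `i`. -/
def WeaklyDominates (u : ∀ i : N, (∀ j, A j) → ℝ) (i : N) (bi ai : A i) : Prop :=
  (∀ a : ∀ j, A j, u i (Function.update a i ai) ≤ u i (Function.update a i bi)) ∧
  ∃ a : ∀ j, A j, u i (Function.update a i ai) < u i (Function.update a i bi)

/-- Undominated Nash equilibrium. -/
def IsUndominatedNash (u : ∀ i : N, (∀ j, A j) → ℝ) (σ : ∀ i, A i → ℝ) : Prop :=
  IsNash u σ ∧ ∀ (i : N) (ai : A i), 0 < σ i ai →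
    ¬ ∃ bi : A i, WeaklyDominates u i bi ai

end GameDefs

/-- A regular quantal response function on a finite set of actions `B`:
interiority, continuity, responsiveness, and monotonicity. -/
def IsRegularQRF {B : Type} [Fintype B] [DecidableEq B]
    (p : (B → ℝ) → (B → ℝ)) : Prop :=
  (∀ x, (∀ a, 0 < p x a) ∧ ∑ a, p x a = 1) ∧
  Continuous p ∧
  (∀ (x : B → ℝ) (η : ℝ) (a : B), 0 < η →
    p x a < p (Function.update x a (x a + η)) a) ∧
  ∀ (x : B → ℝ) (a b : B), x b < x a → p x b < p x a

section QREDefs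

variable {N : Type} [Fintype N] [DecidableEq N] {A : N → Type}
  [∀ i, Fintype (A i)] [∀ i, DecidableEq (A i)]

/-- Quantal response equilibrium with respect to a profile of QRFs `p`. -/
def IsQRE (u : ∀ i : N, (∀ j, A j) → ℝ) (p : ∀ i, (A i → ℝ) → (A i → ℝ))
    (σ : ∀ i, A i → ℝ) : Prop :=
  ∀ i : N, σ i = p i (fun ai => devUtil u σ i ai)

/-- A sequence of profiles of QRFs is utility maximizing in the limit. -/
def UtilityMaximizingInLimit (u : ∀ i : N, (∀ j, A j) → ℝ)
    (p : ℕ → ∀ i, (A i → ℝ) → (A i → ℝ)) : Prop :=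
  ∀ (s : ℕ → ∀ i, A i → ℝ) (σ : ∀ i, A i → ℝ),
    (∀ n, IsQRE u (p n) (s n)) → ConvergesTo s σ → IsNash u σ

/-- `σ` is approachable by regular QRE that are utility maximizing in the limit. -/
def ApproachableByRegularQRE (u : ∀ i : N, (∀ j, A j) → ℝ) (σ : ∀ i, A i → ℝ) : Prop :=
  ∃ p : ℕ → ∀ i, (A i → ℝ) → (A i → ℝ),
    (∀ n i, IsRegularQRF (p n i)) ∧ UtilityMaximizingInLimit u p ∧
    ∃ s : ℕ → ∀ i, A i → ℝ, (∀ n, IsQRE u (p n) (s n)) ∧ ConvergesTo s σ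

end QREDefs

/-- A control cost function (van Damme), bundled with its derivative on `(0,1]`. -/
structure ControlCost where
  f : ℝ → ℝ
  f' : ℝ → ℝ
  hasDeriv : ∀ x ∈ Set.Ioc (0:ℝ) 1, HasDerivWithinAt f (f' x) (Set.Ioc (0:ℝ) 1) x
  contDeriv : ContinuousOn f' (Set.Ioc (0:ℝ) 1)
  anti : StrictAntiOn f (Set.Ioc (0:ℝ) 1)
  convex : StrictConvexOn ℝ (Set.Ioc (0:ℝ) 1) f
  atOne : f 1 = 0
  blowup : Tendsto f (nhdsWithin 0 (Set.Ioi (0:ℝ))) atTop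

/-- The game Γ₁ of Example 1: both players get 1 at (a1,b1) and 0 otherwise.
Player `0` is player 1 (actions `0 = a1`, `1 = a2`); player `1` is player 2
(actions `0 = b1`, `1 = b2`). -/
noncomputable def uGammaOne : ∀ _ : Fin 2, (Fin 2 → Fin 2) → ℝ := fun _ a =>
  ![![(1:ℝ), 0], ![0, 0]] (a 0) (a 1)

/-- The pure profile in which each player `i` plays `x i` with certainty. -/
noncomputable def purePr2 (x : Fin 2 → Fin 2) : ∀ _ : Fin 2, Fin 2 → ℝ :=
  fun i b => if b = x i then 1 else 0

section Empirical

variable {N : Type} [Fintype N] [DecidableEq N] {A : N → Type}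
  [∀ i, Fintype (A i)] [∀ i, DecidableEq (A i)]
  {u : ∀ i : N, (∀ j, A j) → ℝ} {σ : ∀ i, A i → ℝ}

theorem IsEmpirical.of_weaklyPayoffMonotone (hNash : IsNash u σ)
    (hσ : WeaklyPayoffMonotone u σ) : IsEmpirical u σ :=
  ⟨hNash, fun _ => σ, fun _ => hσ, fun _ _ => tendsto_const_nhds⟩

theorem IsEmpirical.le_apply_of_forall_weaklyPayoffMonotone {c : ℝ} {i : N} {a : A i}
    (hσ : IsEmpirical u σ) (h : ∀ τ, WeaklyPayoffMonotone u τ → c ≤ τ i a) : c ≤ σ i a := by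
  obtain ⟨-, s, hs, hconv⟩ := hσ
  exact ge_of_tendsto' (hconv i a) fun n => h _ (hs n)

end Empirical

theorem isStrategy_purePr2 (x : Fin 2 → Fin 2) : IsStrategy (purePr2 x) := by
  refine ⟨fun i a => ?_, fun i => by simp [purePr2]⟩
  unfold purePr2
  split_ifs <;> norm_num

theorem expUtil_uGammaOne (σ : ∀ _ : Fin 2, Fin 2 → ℝ) (i : Fin 2) :
    expUtil uGammaOne σ i = σ 0 0 * σ 1 0 := by
  unfold expUtil uGammaOne
  rw [← (piFinTwoEquiv fun _ => Fin 2).symm.sum_comp]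
  simp [Fintype.sum_prod_type, Fin.sum_univ_two, Fin.prod_univ_two]

theorem expUtil_update_zero_uGammaOne (σ : ∀ _ : Fin 2, Fin 2 → ℝ) (μ : Fin 2 → ℝ) :
    expUtil uGammaOne (Function.update σ 0 μ) 0 = μ 0 * σ 1 0 := by
  simp [expUtil_uGammaOne, Function.update]

theorem expUtil_update_one_uGammaOne (σ : ∀ _ : Fin 2, Fin 2 → ℝ) (μ : Fin 2 → ℝ) :
    expUtil uGammaOne (Function.update σ 1 μ) 1 = σ 0 0 * μ 0 := by
  simp [expUtil_uGammaOne, Function.update]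

theorem devUtil_zero_uGammaOne (σ : ∀ _ : Fin 2, Fin 2 → ℝ) (a : Fin 2) :
    devUtil uGammaOne σ 0 a = if a = 0 then σ 1 0 else 0 := by
  rw [devUtil, expUtil_update_zero_uGammaOne]
  split_ifs <;> simp_all

theorem devUtil_one_uGammaOne (σ : ∀ _ : Fin 2, Fin 2 → ℝ) (a : Fin 2) :
    devUtil uGammaOne σ 1 a = if a = 0 then σ 0 0 else 0 := by
  rw [devUtil, expUtil_update_one_uGammaOne]
  split_ifs <;> simp_all

theorem isNash_uGammaOne {σ : ∀ _ : Fin 2, Fin 2 → ℝ} (hσ : IsStrategy σ)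
    (h₀ : devUtil uGammaOne σ 0 0 ≤ expUtil uGammaOne σ 0)
    (h₁ : devUtil uGammaOne σ 1 0 ≤ expUtil uGammaOne σ 1) : IsNash uGammaOne σ := by
  rw [devUtil_zero_uGammaOne, if_pos rfl, expUtil_uGammaOne] at h₀
  rw [devUtil_one_uGammaOne, if_pos rfl, expUtil_uGammaOne] at h₁
  have mass_le_one : ∀ μ : Fin 2 → ℝ, (∀ a, 0 ≤ μ a) → ∑ a, μ a = 1 → μ 0 ≤ 1 := by
    intro μ hμ hμsum
    rw [Fin.sum_univ_two] at hμsum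
    linarith [hμ 1]
  refine ⟨hσ, Fin.forall_fin_two.mpr ⟨fun μ hμ hμsum => ?_, fun μ hμ hμsum => ?_⟩⟩
  · rw [expUtil_update_zero_uGammaOne, expUtil_uGammaOne]
    nlinarith [hσ.1 1 0, hμ 0, mass_le_one μ hμ hμsum]
  · rw [expUtil_update_one_uGammaOne, expUtil_uGammaOne]
    nlinarith [hσ.1 0 0, hμ 0, mass_le_one μ hμ hμsum]

theorem half_le_of_weaklyPayoffMonotone_uGammaOne {σ : ∀ _ : Fin 2, Fin 2 → ℝ}
    (hσ : WeaklyPayoffMonotone uGammaOne σ) : 1 / 2 ≤ σ 0 0 := by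
  obtain ⟨⟨hnonneg, hsum⟩, hmono⟩ := hσ
  by_contra! hlt
  have hfavors_a2 : σ 0 0 < σ 0 1 := by
    linarith [Fin.sum_univ_two (σ 0) ▸ hsum 0]
  have hpays_more := hmono 0 1 0 hfavors_a2
  rw [devUtil_zero_uGammaOne, devUtil_zero_uGammaOne, if_pos rfl, if_neg (by decide)] at hpays_more
  linarith [hnonneg 1 0]

theorem weaklyPayoffMonotone_purePr2_zero_uGammaOne :
    WeaklyPayoffMonotone uGammaOne (purePr2 ![0, 0]) := by
  refine ⟨isStrategy_purePr2 _, fun i a b hlt => ?_⟩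
  fin_cases i <;> fin_cases a <;> fin_cases b <;>
    simp_all [purePr2, devUtil_zero_uGammaOne, devUtil_one_uGammaOne]

/-- in Γ₁, (a1,b1) and (a2,b2) are Nash equilibria, every weakly payoff
monotone profile has player 1 playing a1 with probability at least 1/2, and (a1,b1)
is an empirical equilibrium while (a2,b2) is not. -/
theorem gammaOne_empirical_analysis :
    (IsNash uGammaOne (purePr2 ![0, 0]) ∧ IsNash uGammaOne (purePr2 ![1, 1])) ∧
    (∀ σ : ∀ _ : Fin 2, Fin 2 → ℝ,
      WeaklyPayoffMonotone uGammaOne σ → 1 / 2 ≤ σ 0 0) ∧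
    (IsEmpirical uGammaOne (purePr2 ![0, 0]) ∧
      ¬ IsEmpirical uGammaOne (purePr2 ![1, 1])) := by
  have hNash (x : Fin 2) : IsNash uGammaOne (purePr2 ![x, x]) := by
    refine isNash_uGammaOne (isStrategy_purePr2 _) ?_ ?_ <;> fin_cases x <;>
      simp [devUtil_zero_uGammaOne, devUtil_one_uGammaOne, expUtil_uGammaOne, purePr2]
  refine ⟨⟨hNash 0, hNash 1⟩, fun σ => half_le_of_weaklyPayoffMonotone_uGammaOne,
    IsEmpirical.of_weaklyPayoffMonotone (hNash 0) weaklyPayoffMonotone_purePr2_zero_uGammaOne,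
    fun hEmp => ?_⟩
  have hhalf := hEmp.le_apply_of_forall_weaklyPayoffMonotone (i := 0) (a := 0)
    fun τ => half_le_of_weaklyPayoffMonotone_uGammaOne
  norm_num [purePr2] at hhalf
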